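/- Let H be a Hopf algebra over a field, and let M be a left H-module and left H-comodule satisfying the left-left Yetter–Drinfel'd condition λ(h·m) = ∑ h₍₁₎·m₍₋₁₎·S(h₍₃₎) ⊗ h₍₂₎·m₍₀₎. Then the linear map c: M ⊗ M → M ⊗ M defined by c(m ⊗ n) = ∑ (m₍₋₁₎·n) ⊗ m₍₀₎ satisfies the braid (Yang–Baxter) equation (c ⊗ id) ∘ (id ⊗ c) ∘ (c ⊗ id) = (id ⊗ c) ∘ (c ⊗ id) ∘ (id ⊗ c) on M ⊗ M ⊗ M. -/
import Mathlib


open TensorProduct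

noncomputable section

variable (k H : Type*) [Field k] [Ring H] [HopfAlgebra k H]
variable (M N : Type*) [AddCommGroup M] [Module k M] [AddCommGroup N] [Module k N]

/-- The uncurried action `H ⊗ M →ₗ M` of a (curried) action `act : H →ₗ M →ₗ M`. -/
def actU (act : H →ₗ[k] M →ₗ[k] M) : H ⊗[k] M →ₗ[k] M := TensorProduct.lift act

/-- `h ⊗ m ↦ λ(h·m)`. -/
def ydLLB_lhs (act : H →ₗ[k] M →ₗ[k] M) (lam : M →ₗ[k] H ⊗[k] M) :
    H ⊗[k] M →ₗ[k] H ⊗[k] M :=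
  lam ∘ₗ actU k H M act

/-- `h ⊗ m ↦ ∑ h₍₁₎·m₍₋₁₎·S(h₍₃₎) ⊗ h₍₂₎·m₍₀₎`, the antipode form of the left-left
Yetter–Drinfel'd compatibility. -/
def ydLLB_rhs (act : H →ₗ[k] M →ₗ[k] M) (lam : M →ₗ[k] H ⊗[k] M) :
    H ⊗[k] M →ₗ[k] H ⊗[k] M :=
  (TensorProduct.map (LinearMap.mul' k H) (actU k H M act))
    ∘ₗ (TensorProduct.tensorTensorTensorComm k H H H M).toLinearMap
    ∘ₗ (TensorProduct.map
          ((LinearMap.rTensor H (LinearMap.mul' k H))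
            ∘ₗ (TensorProduct.assoc k H H H).symm.toLinearMap
            ∘ₗ (LinearMap.lTensor H (TensorProduct.comm k H H).toLinearMap)
            ∘ₗ (TensorProduct.assoc k H H H).toLinearMap)
          (LinearMap.rTensor M (HopfAlgebra.antipode (R := k))))
    ∘ₗ (TensorProduct.tensorTensorTensorComm k (H ⊗[k] H) H H M).toLinearMap
    ∘ₗ (TensorProduct.map
          ((LinearMap.rTensor H (Coalgebra.comul (R := k))) ∘ₗ (Coalgebra.comul (R := k))) lam)

/-- The Yetter–Drinfel'd braiding `c(m ⊗ n) = ∑ (m₍₋₁₎·n) ⊗ m₍₀₎`. -/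
def braidc (lamM : M →ₗ[k] H ⊗[k] M) (actN : H →ₗ[k] N →ₗ[k] N) :
    M ⊗[k] N →ₗ[k] N ⊗[k] M :=
  (LinearMap.rTensor M (TensorProduct.lift actN))
    ∘ₗ (TensorProduct.assoc k H N M).symm.toLinearMap
    ∘ₗ (LinearMap.lTensor H (TensorProduct.comm k M N).toLinearMap)
    ∘ₗ (TensorProduct.assoc k H M N).toLinearMap
    ∘ₗ (LinearMap.rTensor N lamM)

namespace YDaux

open LinearMap Coalgebra HopfAlgebra

def Gmap (act : H →ₗ[k] M →ₗ[k] M) : (H ⊗[k] M) ⊗[k] M →ₗ[k] M ⊗[k] M :=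
  (LinearMap.rTensor M (TensorProduct.lift act))
    ∘ₗ (TensorProduct.assoc k H M M).symm.toLinearMap
    ∘ₗ (LinearMap.lTensor H (TensorProduct.comm k M M).toLinearMap)
    ∘ₗ (TensorProduct.assoc k H M M).toLinearMap

@[simp] lemma Gmap_tmul (act : H →ₗ[k] M →ₗ[k] M) (h : H) (x z : M) :
    Gmap k H M act ((h ⊗ₜ[k] x) ⊗ₜ[k] z) = act h z ⊗ₜ[k] x := by
  simp [Gmap]

lemma braidc_apply (lam : M →ₗ[k] H ⊗[k] M) (act : H →ₗ[k] M →ₗ[k] M) (m n : M) :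
    braidc k H M M lam act (m ⊗ₜ[k] n) = Gmap k H M act (lam m ⊗ₜ[k] n) := by
  rfl

def C2 : H →ₗ[k] (H ⊗[k] H) ⊗[k] H :=
  (LinearMap.rTensor H (Coalgebra.comul (R := k))) ∘ₗ (Coalgebra.comul (R := k))

def fmap : (H ⊗[k] H) ⊗[k] H →ₗ[k] H ⊗[k] H :=
  (LinearMap.rTensor H (LinearMap.mul' k H))
    ∘ₗ (TensorProduct.assoc k H H H).symm.toLinearMap
    ∘ₗ (LinearMap.lTensor H (TensorProduct.comm k H H).toLinearMap)
    ∘ₗ (TensorProduct.assoc k H H H).toLinearMap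

@[simp] lemma fmap_tmul (u v w : H) :
    fmap k H ((u ⊗ₜ[k] v) ⊗ₜ[k] w) = (u * w) ⊗ₜ[k] v := by
  simp [fmap]

def Zmap (act : H →ₗ[k] M →ₗ[k] M) :
    ((H ⊗[k] H) ⊗[k] H) ⊗[k] (H ⊗[k] M) →ₗ[k] H ⊗[k] M :=
  (TensorProduct.map (LinearMap.mul' k H) (TensorProduct.lift act))
    ∘ₗ (TensorProduct.tensorTensorTensorComm k H H H M).toLinearMap
    ∘ₗ (TensorProduct.map (fmap k H)
          (LinearMap.rTensor M (HopfAlgebra.antipode (R := k))))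
    ∘ₗ (TensorProduct.tensorTensorTensorComm k (H ⊗[k] H) H H M).toLinearMap

lemma ydrhs_decomp (act : H →ₗ[k] M →ₗ[k] M) (lam : M →ₗ[k] H ⊗[k] M) (n : M) :
    ydLLB_rhs k H M act lam ∘ₗ (TensorProduct.mk k H M).flip n =
      Zmap k H M act ∘ₗ (TensorProduct.mk k ((H ⊗[k] H) ⊗[k] H) (H ⊗[k] M)).flip (lam n)
        ∘ₗ C2 k H := by
  ext h
  simp [ydLLB_rhs, Zmap, C2, fmap, actU]

def Vmap (act : H →ₗ[k] M →ₗ[k] M) (s : H ⊗[k] M) :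
    (H ⊗[k] H) ⊗[k] H →ₗ[k] H ⊗[k] M :=
  (TensorProduct.map (LinearMap.mul' k H) (TensorProduct.lift act))
    ∘ₗ (TensorProduct.tensorTensorTensorComm k H H H M).toLinearMap
    ∘ₗ (LinearMap.rTensor (H ⊗[k] M) (fmap k H))
    ∘ₗ (TensorProduct.tensorTensorTensorComm k (H ⊗[k] H) H H M).toLinearMap
    ∘ₗ (TensorProduct.mk k ((H ⊗[k] H) ⊗[k] H) (H ⊗[k] M)).flip s

lemma Vmap_zero (act : H →ₗ[k] M →ₗ[k] M) : Vmap k H M act 0 = 0 := by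
  unfold Vmap; rw [map_zero]; simp only [LinearMap.comp_zero]

lemma Vmap_add (act : H →ₗ[k] M →ₗ[k] M) (s1 s2 : H ⊗[k] M) :
    Vmap k H M act (s1 + s2) = Vmap k H M act s1 + Vmap k H M act s2 := by
  unfold Vmap; rw [map_add]; simp only [LinearMap.comp_add]

def mergemap : (H ⊗[k] M) ⊗[k] H →ₗ[k] H ⊗[k] M :=
  (LinearMap.rTensor M (LinearMap.mul' k H))
    ∘ₗ (TensorProduct.assoc k H H M).symm.toLinearMap
    ∘ₗ (LinearMap.lTensor H (TensorProduct.comm k M H).toLinearMap)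
    ∘ₗ (TensorProduct.assoc k H M H).toLinearMap

@[simp] lemma mergemap_tmul (a v : H) (x : M) :
    mergemap k H M ((a ⊗ₜ[k] x) ⊗ₜ[k] v) = (a * v) ⊗ₜ[k] x := by
  simp [mergemap]

def FFcore (act : H →ₗ[k] M →ₗ[k] M) (s : H ⊗[k] M) : H ⊗[k] H →ₗ[k] H ⊗[k] M :=
  (TensorProduct.map (LinearMap.mul' k H) (TensorProduct.lift act))
    ∘ₗ (TensorProduct.tensorTensorTensorComm k H H H M).toLinearMap
    ∘ₗ (TensorProduct.mk k (H ⊗[k] H) (H ⊗[k] M)).flip s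

def qmap (act : H →ₗ[k] M →ₗ[k] M) (s : H ⊗[k] M) (p : M) : H ⊗[k] H →ₗ[k] M ⊗[k] M :=
  (TensorProduct.map
      (TensorProduct.lift act ∘ₗ
        LinearMap.lTensor H (TensorProduct.lift act ∘ₗ (TensorProduct.mk k H M).flip p))
      (TensorProduct.lift act))
    ∘ₗ (TensorProduct.tensorTensorTensorComm k H H H M).toLinearMap
    ∘ₗ (TensorProduct.mk k (H ⊗[k] H) (H ⊗[k] M)).flip s

lemma qmap_zero (act : H →ₗ[k] M →ₗ[k] M) (p : M) : qmap k H M act 0 p = 0 := by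
  unfold qmap; rw [map_zero]; simp only [LinearMap.comp_zero]

lemma qmap_add (act : H →ₗ[k] M →ₗ[k] M) (s1 s2 : H ⊗[k] M) (p : M) :
    qmap k H M act (s1 + s2) p = qmap k H M act s1 p + qmap k H M act s2 p := by
  unfold qmap; rw [map_add]; simp only [LinearMap.comp_add]

def phi0 (act : H →ₗ[k] M →ₗ[k] M) (lam : M →ₗ[k] H ⊗[k] M) (n p : M) :
    H ⊗[k] H →ₗ[k] M ⊗[k] M :=
  Gmap k H M act ∘ₗ
    (TensorProduct.map (ydLLB_lhs k H M act lam ∘ₗ (TensorProduct.mk k H M).flip n)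
      (TensorProduct.lift act ∘ₗ (TensorProduct.mk k H M).flip p))

lemma coassoc4 :
    (TensorProduct.assoc k (H ⊗[k] H) H H).toLinearMap ∘ₗ
        LinearMap.rTensor H (C2 k H) ∘ₗ (Coalgebra.comul (R := k)) =
      LinearMap.lTensor (H ⊗[k] H) (Coalgebra.comul (R := k)) ∘ₗ C2 k H := by
  apply LinearMap.ext; intro h
  have e1 : LinearMap.rTensor H (C2 k H) =
      TensorProduct.map (TensorProduct.map (Coalgebra.comul (R := k)) LinearMap.id)
        LinearMap.id ∘ₗ LinearMap.rTensor H (Coalgebra.comul (R := k)) := by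
    rw [C2, LinearMap.rTensor_comp]; rfl
  simp only [LinearMap.comp_apply, LinearEquiv.coe_coe]
  rw [e1, LinearMap.comp_apply, ← TensorProduct.map_map_assoc, Coalgebra.coassoc_apply,
    ← LinearMap.comp_apply (TensorProduct.map _ _), LinearMap.map_comp_lTensor,
    C2, LinearMap.comp_apply,
    ← LinearMap.comp_apply (LinearMap.lTensor _ _), LinearMap.lTensor_comp_rTensor]
  simp only [TensorProduct.map_id, LinearMap.id_comp]

lemma key1 :
    LinearMap.lTensor (H ⊗[k] H)
        (LinearMap.mul' k H ∘ₗ LinearMap.rTensor H (HopfAlgebra.antipode (R := k))) ∘ₗ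
      (TensorProduct.assoc k (H ⊗[k] H) H H).toLinearMap ∘ₗ
      LinearMap.rTensor H (C2 k H) ∘ₗ (Coalgebra.comul (R := k)) =
    (TensorProduct.mk k (H ⊗[k] H) H).flip 1 ∘ₗ (Coalgebra.comul (R := k)) := by
  rw [coassoc4, ← LinearMap.comp_assoc, ← LinearMap.lTensor_comp]
  rw [LinearMap.comp_assoc (Coalgebra.comul (R := k))
    (LinearMap.rTensor H (HopfAlgebra.antipode (R := k))) (LinearMap.mul' k H)]
  rw [HopfAlgebra.mul_antipode_rTensor_comul]
  apply LinearMap.ext; intro h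
  simp only [LinearMap.comp_apply, C2]
  rw [LinearMap.lTensor_comp, LinearMap.comp_apply,
    ← LinearMap.comp_apply (LinearMap.lTensor _ _) (LinearMap.rTensor _ _),
    LinearMap.lTensor_comp_rTensor, ← LinearMap.rTensor_comp_lTensor, LinearMap.comp_apply,
    Coalgebra.lTensor_counit_comul]
  simp

lemma Wfact (act : H →ₗ[k] M →ₗ[k] M) (s : H ⊗[k] M) :
    mergemap k H M ∘ₗ LinearMap.rTensor H (Zmap k H M act) ∘ₗ
        LinearMap.rTensor H ((TensorProduct.mk k ((H ⊗[k] H) ⊗[k] H) (H ⊗[k] M)).flip s) =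
      Vmap k H M act s ∘ₗ
        LinearMap.lTensor (H ⊗[k] H)
          (LinearMap.mul' k H ∘ₗ LinearMap.rTensor H (HopfAlgebra.antipode (R := k))) ∘ₗ
        (TensorProduct.assoc k (H ⊗[k] H) H H).toLinearMap := by
  induction s using TensorProduct.induction_on with
  | zero =>
    rw [map_zero, LinearMap.rTensor_zero, Vmap_zero]
    simp only [LinearMap.zero_comp, LinearMap.comp_zero]
  | tmul a b =>
    apply TensorProduct.ext_fourfold
    intro u1 u2 v g
    simp [Zmap, Vmap, mul_assoc]
  | add s1 s2 ih1 ih2 =>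
    rw [map_add, LinearMap.rTensor_add, LinearMap.comp_add, LinearMap.comp_add, Vmap_add,
      LinearMap.add_comp, ih1, ih2]

lemma Vone (act : H →ₗ[k] M →ₗ[k] M) (s : H ⊗[k] M) :
    Vmap k H M act s ∘ₗ (TensorProduct.mk k (H ⊗[k] H) H).flip 1 = FFcore k H M act s := by
  induction s using TensorProduct.induction_on with
  | zero =>
    rw [Vmap_zero]
    unfold FFcore; rw [map_zero]
    simp only [LinearMap.zero_comp, LinearMap.comp_zero]
  | tmul a b =>
    apply TensorProduct.ext'
    intro u w
    simp [Vmap, FFcore]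
  | add s1 s2 ih1 ih2 =>
    rw [Vmap_add, LinearMap.add_comp, ih1, ih2]
    unfold FFcore; rw [map_add]
    simp only [LinearMap.comp_add]

lemma claim (act : H →ₗ[k] M →ₗ[k] M) (lam : M →ₗ[k] H ⊗[k] M) (n : M) :
    mergemap k H M ∘ₗ
        LinearMap.rTensor H (ydLLB_rhs k H M act lam ∘ₗ (TensorProduct.mk k H M).flip n) ∘ₗ
        (Coalgebra.comul (R := k)) =
      FFcore k H M act (lam n) ∘ₗ (Coalgebra.comul (R := k)) := by
  rw [ydrhs_decomp]
  apply LinearMap.ext; intro h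
  simp only [LinearMap.comp_apply, LinearMap.rTensor_comp]
  have w := LinearMap.congr_fun (Wfact k H M act (lam n))
    ((LinearMap.rTensor H (C2 k H)) ((Coalgebra.comul (R := k)) h))
  simp only [LinearMap.comp_apply] at w
  rw [w]
  have k1 := LinearMap.congr_fun (key1 k H) h
  simp only [LinearMap.comp_apply] at k1
  rw [k1]
  have v := LinearMap.congr_fun (Vone k H M act (lam n)) ((Coalgebra.comul (R := k)) h)
  simp only [LinearMap.comp_apply] at v
  rw [v]

lemma actcomp (act : H →ₗ[k] M →ₗ[k] M)
    (hact_mul : ∀ g h : H, act (g * h) = act g ∘ₗ act h) (p : M) :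
    Gmap k H M act ∘ₗ
        LinearMap.lTensor (H ⊗[k] M)
          (TensorProduct.lift act ∘ₗ (TensorProduct.mk k H M).flip p) =
      (Gmap k H M act ∘ₗ (TensorProduct.mk k (H ⊗[k] M) M).flip p) ∘ₗ mergemap k H M := by
  apply TensorProduct.ext_threefold
  intro h x v
  simp [hact_mul h v]

lemma qeq (act : H →ₗ[k] M →ₗ[k] M)
    (hact_mul : ∀ g h : H, act (g * h) = act g ∘ₗ act h) (s : H ⊗[k] M) (p : M) :
    (Gmap k H M act ∘ₗ (TensorProduct.mk k (H ⊗[k] M) M).flip p) ∘ₗ FFcore k H M act s =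
      qmap k H M act s p := by
  induction s using TensorProduct.induction_on with
  | zero =>
    rw [qmap_zero]
    unfold FFcore; rw [map_zero]
    simp only [LinearMap.comp_zero]
  | tmul a b =>
    apply TensorProduct.ext'
    intro u w
    simp [FFcore, qmap, hact_mul u a]
  | add s1 s2 ih1 ih2 =>
    rw [qmap_add, ← ih1, ← ih2]
    unfold FFcore; rw [map_add]
    simp only [LinearMap.comp_add]

lemma mapkey (act : H →ₗ[k] M →ₗ[k] M) (lam : M →ₗ[k] H ⊗[k] M)
    (hact_mul : ∀ g h : H, act (g * h) = act g ∘ₗ act h)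
    (hYD : ydLLB_lhs k H M act lam = ydLLB_rhs k H M act lam) (n p : M) :
    phi0 k H M act lam n p ∘ₗ (Coalgebra.comul (R := k)) =
      qmap k H M act (lam n) p ∘ₗ (Coalgebra.comul (R := k)) := by
  rw [phi0, hYD, ← LinearMap.lTensor_comp_rTensor]
  apply LinearMap.ext; intro h
  simp only [LinearMap.comp_apply]
  have a := LinearMap.congr_fun (actcomp k H M act hact_mul p)
    ((LinearMap.rTensor H (ydLLB_rhs k H M act lam ∘ₗ (TensorProduct.mk k H M).flip n))
      ((Coalgebra.comul (R := k)) h))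
  simp only [LinearMap.comp_apply] at a
  rw [a]
  have cl := LinearMap.congr_fun (claim k H M act lam n) h
  simp only [LinearMap.comp_apply] at cl
  rw [cl]
  have q := LinearMap.congr_fun (qeq k H M act hact_mul (lam n) p) ((Coalgebra.comul (R := k)) h)
  simp only [LinearMap.comp_apply] at q
  rw [q]


lemma mainL (act : H →ₗ[k] M →ₗ[k] M) (lam : M →ₗ[k] H ⊗[k] M)
    (hlam_coassoc : (LinearMap.rTensor M (Coalgebra.comul (R := k))) ∘ₗ lam =
      (TensorProduct.assoc k H H M).symm.toLinearMap ∘ₗ (LinearMap.lTensor H lam) ∘ₗ lam)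
    (m n p : M) :
    ((LinearMap.rTensor M (braidc k H M M lam act))
        ∘ₗ ((TensorProduct.assoc k M M M).symm.toLinearMap
            ∘ₗ (LinearMap.lTensor M (braidc k H M M lam act))
            ∘ₗ (TensorProduct.assoc k M M M).toLinearMap)
        ∘ₗ (LinearMap.rTensor M (braidc k H M M lam act))) ((m ⊗ₜ[k] n) ⊗ₜ[k] p) =
      LinearMap.rTensor M (phi0 k H M act lam n p ∘ₗ (Coalgebra.comul (R := k))) (lam m) := by
  simp only [LinearMap.comp_apply, LinearEquiv.coe_coe]
  rw [LinearMap.rTensor_tmul, braidc_apply]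
  have S2 : ∀ (h : H) (s : H ⊗[k] M),
      LinearMap.rTensor M (braidc k H M M lam act)
          ((TensorProduct.assoc k M M M).symm ((act h n) ⊗ₜ[k] Gmap k H M act (s ⊗ₜ[k] p))) =
        LinearMap.rTensor M (phi0 k H M act lam n p)
          ((TensorProduct.assoc k H H M).symm (h ⊗ₜ[k] s)) := by
    intro h s
    induction s using TensorProduct.induction_on with
    | zero => simp
    | tmul g y =>
      simp [phi0, ydLLB_lhs, actU, braidc_apply]
    | add s1 s2 ih1 ih2 =>
      simp only [TensorProduct.add_tmul, TensorProduct.tmul_add, map_add]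
      rw [ih1, ih2]
  have S1 : ∀ t : H ⊗[k] M,
      LinearMap.rTensor M (braidc k H M M lam act)
          ((TensorProduct.assoc k M M M).symm
            (LinearMap.lTensor M (braidc k H M M lam act)
              ((TensorProduct.assoc k M M M) (Gmap k H M act (t ⊗ₜ[k] n) ⊗ₜ[k] p)))) =
        LinearMap.rTensor M (phi0 k H M act lam n p)
          ((TensorProduct.assoc k H H M).symm (LinearMap.lTensor H lam t)) := by
    intro t
    induction t using TensorProduct.induction_on with
    | zero => simp
    | tmul h x =>
      rw [Gmap_tmul, TensorProduct.assoc_tmul, LinearMap.lTensor_tmul, braidc_apply,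
        S2 h (lam x), LinearMap.lTensor_tmul]
    | add t1 t2 ih1 ih2 =>
      simp only [TensorProduct.add_tmul, TensorProduct.tmul_add, map_add]
      rw [ih1, ih2]
  rw [S1 (lam m)]
  have hc := LinearMap.congr_fun hlam_coassoc m
  simp only [LinearMap.comp_apply, LinearEquiv.coe_coe] at hc
  rw [← hc, ← LinearMap.comp_apply, ← LinearMap.rTensor_comp]

lemma mainR (act : H →ₗ[k] M →ₗ[k] M) (lam : M →ₗ[k] H ⊗[k] M)
    (hlam_coassoc : (LinearMap.rTensor M (Coalgebra.comul (R := k))) ∘ₗ lam =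
      (TensorProduct.assoc k H H M).symm.toLinearMap ∘ₗ (LinearMap.lTensor H lam) ∘ₗ lam)
    (m n p : M) :
    (((TensorProduct.assoc k M M M).symm.toLinearMap
          ∘ₗ (LinearMap.lTensor M (braidc k H M M lam act))
          ∘ₗ (TensorProduct.assoc k M M M).toLinearMap)
        ∘ₗ (LinearMap.rTensor M (braidc k H M M lam act))
        ∘ₗ ((TensorProduct.assoc k M M M).symm.toLinearMap
            ∘ₗ (LinearMap.lTensor M (braidc k H M M lam act))
            ∘ₗ (TensorProduct.assoc k M M M).toLinearMap)) ((m ⊗ₜ[k] n) ⊗ₜ[k] p) =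
      LinearMap.rTensor M (qmap k H M act (lam n) p ∘ₗ (Coalgebra.comul (R := k))) (lam m) := by
  simp only [LinearMap.comp_apply, LinearEquiv.coe_coe]
  rw [TensorProduct.assoc_tmul, LinearMap.lTensor_tmul, braidc_apply]
  have T3 : ∀ (h a : H) (b : M) (s' : H ⊗[k] M),
      (TensorProduct.assoc k M M M).symm
          ((act h (act a p)) ⊗ₜ[k] Gmap k H M act (s' ⊗ₜ[k] b)) =
        LinearMap.rTensor M (qmap k H M act (a ⊗ₜ[k] b) p)
          ((TensorProduct.assoc k H H M).symm (h ⊗ₜ[k] s')) := by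
    intro h a b s'
    induction s' using TensorProduct.induction_on with
    | zero => simp
    | tmul g y => simp [qmap]
    | add s1 s2 ih1 ih2 =>
      simp only [TensorProduct.add_tmul, TensorProduct.tmul_add, map_add]
      rw [ih1, ih2]
  have T2 : ∀ (a : H) (b : M) (t : H ⊗[k] M),
      (TensorProduct.assoc k M M M).symm
          (LinearMap.lTensor M (braidc k H M M lam act)
            ((TensorProduct.assoc k M M M) (Gmap k H M act (t ⊗ₜ[k] (act a p)) ⊗ₜ[k] b))) =
        LinearMap.rTensor M (qmap k H M act (a ⊗ₜ[k] b) p)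
          ((TensorProduct.assoc k H H M).symm (LinearMap.lTensor H lam t)) := by
    intro a b t
    induction t using TensorProduct.induction_on with
    | zero => simp
    | tmul h x =>
      rw [Gmap_tmul, TensorProduct.assoc_tmul, LinearMap.lTensor_tmul, braidc_apply,
        T3 h a b (lam x), LinearMap.lTensor_tmul]
    | add t1 t2 ih1 ih2 =>
      simp only [TensorProduct.add_tmul, TensorProduct.tmul_add, map_add]
      rw [ih1, ih2]
  have T1 : ∀ s : H ⊗[k] M,
      (TensorProduct.assoc k M M M).symm
          (LinearMap.lTensor M (braidc k H M M lam act)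
            ((TensorProduct.assoc k M M M)
              (LinearMap.rTensor M (braidc k H M M lam act)
                ((TensorProduct.assoc k M M M).symm (m ⊗ₜ[k] Gmap k H M act (s ⊗ₜ[k] p)))))) =
        LinearMap.rTensor M (qmap k H M act s p ∘ₗ (Coalgebra.comul (R := k))) (lam m) := by
    intro s
    induction s using TensorProduct.induction_on with
    | zero =>
      rw [qmap_zero, LinearMap.zero_comp, LinearMap.rTensor_zero]
      simp
    | tmul a b =>
      rw [Gmap_tmul, TensorProduct.assoc_symm_tmul, LinearMap.rTensor_tmul, braidc_apply,
        T2 a b (lam m)]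
      have hc := LinearMap.congr_fun hlam_coassoc m
      simp only [LinearMap.comp_apply, LinearEquiv.coe_coe] at hc
      rw [← hc, ← LinearMap.comp_apply, ← LinearMap.rTensor_comp]
    | add s1 s2 ih1 ih2 =>
      rw [qmap_add, LinearMap.add_comp, LinearMap.rTensor_add]
      simp only [TensorProduct.add_tmul, TensorProduct.tmul_add, map_add, LinearMap.add_apply]
      rw [ih1, ih2]
  rw [T1 (lam n)]

end YDaux

/-- For a left-left Yetter–Drinfel'd module `M` over a Hopf algebra `H` over a field, the map
`c(m ⊗ n) = ∑ (m₍₋₁₎·n) ⊗ m₍₀₎` satisfies the braid (Yang–Baxter) equation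
`(c ⊗ id)(id ⊗ c)(c ⊗ id) = (id ⊗ c)(c ⊗ id)(id ⊗ c)` on `M ⊗ M ⊗ M`. -/
theorem yd_braiding_yang_baxter
    (act : H →ₗ[k] M →ₗ[k] M) (lam : M →ₗ[k] H ⊗[k] M)
    (hact_one : act 1 = LinearMap.id)
    (hact_mul : ∀ g h : H, act (g * h) = act g ∘ₗ act h)
    (hlam_counit : ∀ m : M,
      (TensorProduct.lid k M) ((LinearMap.rTensor M (Coalgebra.counit (R := k))) (lam m)) = m)
    (hlam_coassoc : (LinearMap.rTensor M (Coalgebra.comul (R := k))) ∘ₗ lam =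
      (TensorProduct.assoc k H H M).symm.toLinearMap ∘ₗ (LinearMap.lTensor H lam) ∘ₗ lam)
    (hYD : ydLLB_lhs k H M act lam = ydLLB_rhs k H M act lam) :
    (LinearMap.rTensor M (braidc k H M M lam act))
        ∘ₗ ((TensorProduct.assoc k M M M).symm.toLinearMap
            ∘ₗ (LinearMap.lTensor M (braidc k H M M lam act))
            ∘ₗ (TensorProduct.assoc k M M M).toLinearMap)
        ∘ₗ (LinearMap.rTensor M (braidc k H M M lam act)) =
      ((TensorProduct.assoc k M M M).symm.toLinearMap
          ∘ₗ (LinearMap.lTensor M (braidc k H M M lam act))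
          ∘ₗ (TensorProduct.assoc k M M M).toLinearMap)
        ∘ₗ (LinearMap.rTensor M (braidc k H M M lam act))
        ∘ₗ ((TensorProduct.assoc k M M M).symm.toLinearMap
            ∘ₗ (LinearMap.lTensor M (braidc k H M M lam act))
            ∘ₗ (TensorProduct.assoc k M M M).toLinearMap) := by
  apply TensorProduct.ext_threefold
  intro m n p
  rw [YDaux.mainL k H M act lam hlam_coassoc m n p,
    YDaux.mainR k H M act lam hlam_coassoc m n p,
    YDaux.mapkey k H M act lam hact_mul hYD n p]

end
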